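/- arXiv:1510.03463 — 3 statements merged into one kernel-verified Lean document; each statement's English description precedes it below -/
import Mathlib

section
/- Let A, B ∈ R_+^{n×n} be matrices with nonnegative entries and let C ∈ R^{n×n} satisfy C_{ij} ≤ √(A_{ij} B_{ij}) for all i,j (with C having nonnegative entries). Then ρ(C) ≤ √(ρ(A) ρ(B)), where ρ denotes the spectral radius. -/
/-!
Entrywise Cauchy–Schwarz propagates through matrix products: if `C ≤ √(A ∘ B)` entrywise, then
`C ^ k ≤ √(A ^ k ∘ B ^ k)` entrywise for every `k`. The `ℓ∞` operator norm is the largest row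
sum, so one more Cauchy–Schwarz gives `‖C ^ k‖ ≤ √(‖A ^ k‖ ‖B ^ k‖)`, and after taking `k`-th
roots Gelfand's formula yields `ρ(C)² ≤ ρ(A) ρ(B)`.
-/

/-- The spectral radius of a complex square matrix: the supremum of the moduli
of its (complex) eigenvalues. -/
noncomputable def specRad {n : ℕ} (M : Matrix (Fin n) (Fin n) ℂ) : ℝ :=
  sSup ((fun z : ℂ => ‖z‖) '' spectrum ℂ M)

open scoped NNReal ENNReal
open Finset

namespace spectrum

theorem spectralRadius_ne_top {𝕜 A : Type*} [NormedField 𝕜] [NormedRing A] [NormedAlgebra 𝕜 A]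
    [CompleteSpace A] (a : A) : spectralRadius 𝕜 a ≠ ⊤ :=
  ne_top_of_le_ne_top (by finiteness) (spectralRadius_le_pow_nnnorm_pow_one_div 𝕜 a 0)

variable {A : Type*} [NormedRing A] [NormedAlgebra ℂ A] [CompleteSpace A]

theorem spectralRadius_sq_le_mul_of_nnnorm_pow_le {a b c : A}
    (h : ∀ k : ℕ, ‖c ^ k‖₊ ≤ NNReal.sqrt (‖a ^ k‖₊ * ‖b ^ k‖₊)) :
    spectralRadius ℂ c ^ 2 ≤ spectralRadius ℂ a * spectralRadius ℂ b := by
  refine le_of_tendsto_of_tendsto' (ENNReal.Tendsto.pow (gelfand_formula c))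
    (ENNReal.Tendsto.mul (gelfand_formula a) (.inr (spectralRadius_ne_top b))
      (gelfand_formula b) (.inr (spectralRadius_ne_top a))) fun k => ?_
  have hk : (0 : ℝ) ≤ 1 / k := by positivity
  rw [← ENNReal.mul_rpow_of_nonneg _ _ hk, sq, ← ENNReal.mul_rpow_of_nonneg _ _ hk]
  gcongr ?_ ^ _
  rw [← sq]
  exact_mod_cast NNReal.le_sqrt_iff_sq_le.mp (h k)

theorem toReal_spectralRadius_le_sqrt_mul_of_nnnorm_pow_le {a b c : A}
    (h : ∀ k : ℕ, ‖c ^ k‖₊ ≤ NNReal.sqrt (‖a ^ k‖₊ * ‖b ^ k‖₊)) :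
    (spectralRadius ℂ c).toReal ≤
      √((spectralRadius ℂ a).toReal * (spectralRadius ℂ b).toReal) := by
  refine Real.le_sqrt_of_sq_le ?_
  rw [← ENNReal.toReal_pow, ← ENNReal.toReal_mul]
  exact ENNReal.toReal_mono (ENNReal.mul_ne_top (spectralRadius_ne_top a)
    (spectralRadius_ne_top b)) (spectralRadius_sq_le_mul_of_nnnorm_pow_le h)

end spectrum

namespace Matrix

variable {ι : Type*} [Fintype ι] [DecidableEq ι]

theorem pow_apply_le_sqrt_mul {A B C : Matrix ι ι ℝ} (hA : ∀ i j, 0 ≤ A i j)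
    (hB : ∀ i j, 0 ≤ B i j) (hC : ∀ i j, 0 ≤ C i j) (h : ∀ i j, C i j ≤ √(A i j * B i j))
    (k : ℕ) : ∀ i j, (C ^ k) i j ≤ √((A ^ k) i j * (B ^ k) i j) := by
  induction k with
  | zero =>
    intro i j
    by_cases hij : i = j <;> simp [hij]
  | succ k ih =>
    intro i j
    have hAk := pow_apply_nonneg hA k
    have hBk := pow_apply_nonneg hB k
    simp only [pow_succ, mul_apply]
    calc ∑ l, (C ^ k) i l * C l j
        ≤ ∑ l, √((A ^ k) i l * A l j) * √((B ^ k) i l * B l j) := by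
          refine sum_le_sum fun l _ => ?_
          rw [← Real.sqrt_mul (mul_nonneg (hAk i l) (hA l j)),
            mul_mul_mul_comm, Real.sqrt_mul (mul_nonneg (hAk i l) (hBk i l))]
          exact mul_le_mul (ih i l) (h l j) (hC l j) (Real.sqrt_nonneg _)
      _ ≤ √(∑ l, (A ^ k) i l * A l j) * √(∑ l, (B ^ k) i l * B l j) :=
          Real.sum_sqrt_mul_sqrt_le _ (fun l => mul_nonneg (hAk i l) (hA l j))
            (fun l => mul_nonneg (hBk i l) (hB l j))
      _ = √((∑ l, (A ^ k) i l * A l j) * ∑ l, (B ^ k) i l * B l j) :=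
          (Real.sqrt_mul (sum_nonneg fun l _ => mul_nonneg (hAk i l) (hA l j)) _).symm

end Matrix

section LinftyOpNorm

attribute [local instance] Matrix.linftyOpSeminormedAddCommGroup Matrix.linftyOpNormedRing
  Matrix.linftyOpNormedAlgebra

theorem Matrix.linfty_opNNNorm_le_sqrt_mul {m n α : Type*} [Fintype m] [Fintype n]
    [SeminormedAddCommGroup α] {X Y Z : Matrix m n α}
    (h : ∀ i j, ‖Z i j‖₊ ≤ NNReal.sqrt (‖X i j‖₊ * ‖Y i j‖₊)) :
    ‖Z‖₊ ≤ NNReal.sqrt (‖X‖₊ * ‖Y‖₊) := by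
  have row_le (M : Matrix m n α) (i : m) : ∑ j, ‖M i j‖₊ ≤ ‖M‖₊ := by
    rw [linfty_opNNNorm_def]
    exact le_sup (f := fun i => ∑ j, ‖M i j‖₊) (mem_univ i)
  rw [linfty_opNNNorm_def]
  refine Finset.sup_le fun i _ => ?_
  calc ∑ j, ‖Z i j‖₊ ≤ ∑ j, NNReal.sqrt ‖X i j‖₊ * NNReal.sqrt ‖Y i j‖₊ := by
        simpa only [NNReal.sqrt_mul] using sum_le_sum fun j _ => h i j
    _ ≤ NNReal.sqrt (∑ j, ‖X i j‖₊) * NNReal.sqrt (∑ j, ‖Y i j‖₊) :=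
        NNReal.sum_sqrt_mul_sqrt_le _ _ _
    _ ≤ NNReal.sqrt (‖X‖₊ * ‖Y‖₊) := by
        rw [NNReal.sqrt_mul]
        gcongr <;> exact row_le _ i

theorem Matrix.toReal_spectralRadius_map_ofReal_le_sqrt_mul {ι : Type*} [Fintype ι]
    [DecidableEq ι] {A B C : Matrix ι ι ℝ} (hA : ∀ i j, 0 ≤ A i j) (hB : ∀ i j, 0 ≤ B i j)
    (hC : ∀ i j, 0 ≤ C i j) (h : ∀ i j, C i j ≤ √(A i j * B i j)) :
    (spectralRadius ℂ (C.map Complex.ofReal)).toReal ≤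
      √((spectralRadius ℂ (A.map Complex.ofReal)).toReal *
        (spectralRadius ℂ (B.map Complex.ofReal)).toReal) := by
  refine spectrum.toReal_spectralRadius_le_sqrt_mul_of_nnnorm_pow_le fun k => ?_
  have hpow (M : Matrix ι ι ℝ) : M.map Complex.ofReal ^ k = (M ^ k).map Complex.ofReal :=
    (M.map_pow Complex.ofRealHom k).symm
  rw [hpow, hpow, hpow]
  refine linfty_opNNNorm_le_sqrt_mul fun i j => ?_
  have hnorm {M : Matrix ι ι ℝ} (hM : ∀ i j, 0 ≤ M i j) :
      ‖(M ^ k).map Complex.ofReal i j‖ = (M ^ k) i j := by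
    rw [map_apply, Complex.norm_real, Real.norm_of_nonneg (pow_apply_nonneg hM k i j)]
  rw [← NNReal.coe_le_coe, Real.coe_sqrt, NNReal.coe_mul]
  simp only [coe_nnnorm, hnorm hA, hnorm hB, hnorm hC]
  exact pow_apply_le_sqrt_mul hA hB hC h k i j

theorem specRad_eq_toReal_spectralRadius {n : ℕ} (M : Matrix (Fin n) (Fin n) ℂ) :
    specRad M = (spectralRadius ℂ M).toReal := by
  rcases (spectrum ℂ M).eq_empty_or_nonempty with hM | hM
  · simp [specRad, spectralRadius, hM]
  obtain ⟨z, hz, hρ⟩ := spectrum.exists_nnnorm_eq_spectralRadius_of_nonempty hM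
  rw [← hρ, specRad]
  refine IsGreatest.csSup_eq ⟨Set.mem_image_of_mem _ hz, ?_⟩
  rintro _ ⟨w, hw, rfl⟩
  have : (‖w‖₊ : ℝ≥0∞) ≤ ‖z‖₊ := hρ ▸ le_iSup₂ (α := ℝ≥0∞) w hw
  exact_mod_cast this

end LinftyOpNorm

/-- Cauchy–Schwarz inequality for spectral radii: if `A, B` have nonnegative
entries and `C i j ≤ √(A i j * B i j)`, then `ρ(C) ≤ √(ρ(A) ρ(B))`. -/
theorem cauchy_schwarz_spectral_radius {n : ℕ} (A B C : Matrix (Fin n) (Fin n) ℝ)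
    (hA : ∀ i j, 0 ≤ A i j) (hB : ∀ i j, 0 ≤ B i j) (hC : ∀ i j, 0 ≤ C i j)
    (h : ∀ i j, C i j ≤ Real.sqrt (A i j * B i j)) :
    specRad (C.map Complex.ofReal) ≤
      Real.sqrt (specRad (A.map Complex.ofReal) * specRad (B.map Complex.ofReal)) := by
  rw [specRad_eq_toReal_spectralRadius, specRad_eq_toReal_spectralRadius,
    specRad_eq_toReal_spectralRadius]
  exact Matrix.toReal_spectralRadius_map_ofReal_le_sqrt_mul hA hB hC h
end

section
/- Let g_1, ..., g_k ∈ C with Im(g_a) ≥ 0 for all a, let C_1, ..., C_k be positive semidefinite p×p real symmetric matrices, c_1,...,c_k ≥ 0, and let C_0 be positive semidefinite. Then Im tr( C_0 (I_p + Σ_{b=1}^k c_b g_b C_b)^{-1} ) ≤ 0, assuming the inverse exists. -/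
/-!
Split `N = 1 + ∑ c_b g_b C_b` as `N = A + i B` with `A` real symmetric and
`B = ∑ c_b Im(g_b) C_b` positive semidefinite. Since `Nᴴ = A - i B` and
`N⁻¹ = N⁻¹ Nᴴ N⁻¹ᴴ`, we get `tr(C₀ N⁻¹) = tr(C₀ N⁻¹ A N⁻¹ᴴ) - i tr(C₀ N⁻¹ B N⁻¹ᴴ)`.
The first trace is real, being the trace of a product of two Hermitian matrices, and the
second is a nonnegative real, being the trace of a product of two positive semidefinite ones.
-/

open Matrix

namespace Matrix

open scoped ComplexOrder MatrixOrder

variable {n 𝕜 : Type*} [Fintype n] [DecidableEq n] [RCLike 𝕜]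

theorem PosSemidef.trace_mul_nonneg {A B : Matrix n n 𝕜} (hA : A.PosSemidef) (hB : B.PosSemidef) :
    0 ≤ (A * B).trace := by
  obtain ⟨X, rfl⟩ := CStarAlgebra.nonneg_iff_eq_star_mul_self.mp hA.nonneg
  rw [star_eq_conjTranspose, Matrix.mul_assoc, trace_mul_comm]
  exact (hB.mul_mul_conjTranspose_same X).trace_nonneg

omit [DecidableEq n] in
theorem IsHermitian.im_trace_mul_eq_zero {A B : Matrix n n 𝕜} (hA : A.IsHermitian)
    (hB : B.IsHermitian) : RCLike.im (A * B).trace = 0 := by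
  rw [← RCLike.conj_eq_iff_im, ← RCLike.star_def, ← trace_conjTranspose, conjTranspose_mul,
    hA.eq, hB.eq, trace_mul_comm]

theorem PosSemidef.map_ofReal {M : Matrix n n ℝ} (hM : M.PosSemidef) :
    (M.map Complex.ofReal).PosSemidef := by
  obtain ⟨X, rfl⟩ := CStarAlgebra.nonneg_iff_eq_star_mul_self.mp hM.nonneg
  rw [show (star X * X).map Complex.ofReal = (star X * X).map Complex.ofRealHom from rfl,
    Matrix.map_mul, star_eq_conjTranspose,
    conjTranspose_map (⇑Complex.ofRealHom) fun _ => (Complex.conj_ofReal _).symm]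
  exact posSemidef_conjTranspose_mul_self _

theorem im_trace_mul_inv_nonpos {A B C N : Matrix n n ℂ} (hA : A.IsHermitian)
    (hB : B.PosSemidef) (hC : C.PosSemidef) (hN : N = A + Complex.I • B) (hNu : IsUnit N) :
    (C * N⁻¹).trace.im ≤ 0 := by
  have hNH : Nᴴ = A - Complex.I • B := by
    rw [hN, conjTranspose_add, conjTranspose_smul, hA.eq, hB.isHermitian.eq, Complex.star_def,
      Complex.conj_I, neg_smul, sub_eq_add_neg]
  have hNinv : N⁻¹ = N⁻¹ * Nᴴ * N⁻¹ᴴ := by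
    rw [Matrix.mul_assoc, ← conjTranspose_mul,
      Matrix.nonsing_inv_mul _ ((isUnit_iff_isUnit_det N).mp hNu), conjTranspose_one,
      Matrix.mul_one]
  have htr : (C * N⁻¹).trace =
      (C * (N⁻¹ * A * N⁻¹ᴴ)).trace - Complex.I * (C * (N⁻¹ * B * N⁻¹ᴴ)).trace := by
    conv_lhs => rw [hNinv, hNH]
    simp only [Matrix.mul_sub, Matrix.sub_mul, Matrix.mul_smul, Matrix.smul_mul, trace_sub,
      trace_smul, smul_eq_mul]
  have hreal : (C * (N⁻¹ * A * N⁻¹ᴴ)).trace.im = 0 :=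
    hC.isHermitian.im_trace_mul_eq_zero (isHermitian_mul_mul_conjTranspose _ hA)
  have hpos : 0 ≤ (C * (N⁻¹ * B * N⁻¹ᴴ)).trace :=
    hC.trace_mul_nonneg (hB.mul_mul_conjTranspose_same _)
  rw [htr, Complex.sub_im, Complex.mul_im, hreal, Complex.I_re, Complex.I_im]
  linarith [(Complex.nonneg_iff.mp hpos).1]

end Matrix

/-- If `Im g_a ≥ 0`, `c_a ≥ 0`, the `C_a` and `C_0` are real positive
semidefinite, and `I + ∑ c_b g_b C_b` is invertible, then
`Im tr(C_0 (I + ∑ c_b g_b C_b)⁻¹) ≤ 0`. -/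
theorem trace_inverse_im_nonpos {p k : ℕ} (g : Fin k → ℂ) (hg : ∀ a, 0 ≤ (g a).im)
    (c : Fin k → ℝ) (hc : ∀ a, 0 ≤ c a)
    (C : Fin k → Matrix (Fin p) (Fin p) ℝ) (hC : ∀ a, (C a).PosSemidef)
    (C0 : Matrix (Fin p) (Fin p) ℝ) (hC0 : C0.PosSemidef)
    (hinv : IsUnit ((1 : Matrix (Fin p) (Fin p) ℂ) +
      ∑ b, ((c b : ℂ) * g b) • (C b).map Complex.ofReal)) :
    ((C0.map Complex.ofReal *
      ((1 : Matrix (Fin p) (Fin p) ℂ) +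
        ∑ b, ((c b : ℂ) * g b) • (C b).map Complex.ofReal)⁻¹).trace).im ≤ 0 := by
  set A : Matrix (Fin p) (Fin p) ℝ := 1 + ∑ b, (c b * (g b).re) • C b
  set B : Matrix (Fin p) (Fin p) ℝ := ∑ b, (c b * (g b).im) • C b
  have hA : A.IsHermitian :=
    (IsSelfAdjoint.one _).add <| isSelfAdjoint_sum _ fun b _ => (hC b).isHermitian.smul (.all _)
  have hB : B.PosSemidef :=
    posSemidef_sum _ fun b _ => (hC b).smul (mul_nonneg (hc b) (hg b))
  refine im_trace_mul_inv_nonpos (hA.map _ fun _ => (Complex.conj_ofReal _).symm) hB.map_ofReal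
    hC0.map_ofReal ?_ hinv
  ext i j
  apply Complex.ext <;> simp [A, B, Matrix.sum_apply, Matrix.one_apply, apply_ite]
end

section
/- Let (L, d) be the set of analytic functions g : C^+ → C satisfying for all z ∈ C^+: Im g(z) ≥ 0, Im(z g(z)) ≥ 0, and c_0 |g(z)| ≤ (Im z)^{-1} (for a fixed constant c_0 > 0), equipped with the distance d_η(g, h) = sup_{Im z ≥ η} |h(z) − g(z)| for fixed η > 0. Then d_η is a complete metric on L. -/
/-!
Restricting `g ∈ L` to `{Im z ≥ η}` gives a bounded continuous function (as `c₀ |g z| ≤ 1 / Im z`),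
and this restriction is injective by the identity theorem, so `d_η` is the metric induced from the
sup metric of bounded continuous functions.

For completeness, let `(gₙ)` be `d_η`-Cauchy, i.e. uniformly Cauchy on `{Im z ≥ η}`. For `0 < t < η`
the differences `gₘ - gₙ` are bounded by `4 / (c₀ t)` on `{Im z ≥ t/2}`, so Hadamard's three
lines theorem on the strip `t/2 ≤ Im z ≤ η` bounds them on `{Im z ≥ t}` by a positive power of
their sup on `{Im z ≥ η}`. Hence `(gₙ)` is uniformly Cauchy on every `{Im z ≥ t}`, converges locally
uniformly on `ℂ⁺` to an analytic function, and the defining inequalities of `L` pass to the limit.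
This replaces the appeal to Montel's theorem.
-/

open Complex

/-- The open upper half-plane. -/
def UHP : Set ℂ := {z | 0 < z.im}

/-- The class `L` of functions: analytic on `ℂ⁺`, with `Im g(z) ≥ 0`,
`Im(z g(z)) ≥ 0` and `c₀ |g(z)| ≤ (Im z)⁻¹` on `ℂ⁺` (we normalize the
functions to vanish off `ℂ⁺`, so that `L` is a set of functions on `ℂ⁺`). -/
def GoodFun (c0 : ℝ) (g : ℂ → ℂ) : Prop :=
  AnalyticOn ℂ g UHP ∧
    (∀ z ∈ UHP, 0 ≤ (g z).im ∧ 0 ≤ (z * g z).im ∧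
      c0 * ‖g z‖ ≤ (z.im)⁻¹) ∧
    ∀ z, z ∉ UHP → g z = 0

open Set Filter Topology BoundedContinuousFunction

theorem isOpen_UHP : IsOpen UHP := isOpen_lt continuous_const continuous_im

theorem Real.rpow_one_sub_mul_rpow_le {B x θ θ' : ℝ} (hx : 0 < x) (hxB : x ≤ B) (hθ : θ ≤ θ') :
    B ^ (1 - θ') * x ^ θ' ≤ B ^ (1 - θ) * x ^ θ := by
  have hB : 0 < B := hx.trans_le hxB
  have hform : ∀ s : ℝ, B ^ (1 - s) * x ^ s = B * (x / B) ^ s := fun s => by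
    rw [Real.div_rpow hx.le hB.le, Real.rpow_sub hB, Real.rpow_one]
    field_simp
  rw [hform, hform]
  exact mul_le_mul_of_nonneg_left
    (Real.rpow_le_rpow_of_exponent_ge (div_pos hx hB) ((div_le_one hB).mpr hxB) hθ) hB.le

section ThreeLines

variable {E : Type*} [NormedAddCommGroup E] [NormedSpace ℂ E]

theorem norm_le_interp_of_im_mem_Icc {f : ℂ → E} {z : ℂ} {A B a b : ℝ} (hab : a < b)
    (hz : z.im ∈ Icc a b) (hd : DiffContOnCl ℂ f (im ⁻¹' Ioo a b))
    (hbdd : BddAbove ((norm ∘ f) '' (im ⁻¹' Icc a b)))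
    (ha : ∀ w : ℂ, w.im = a → ‖f w‖ ≤ A) (hb : ∀ w : ℂ, w.im = b → ‖f w‖ ≤ B) :
    ‖f z‖ ≤ A ^ (1 - (z.im - a) / (b - a)) * B ^ ((z.im - a) / (b - a)) := by
  have hmaps : ∀ s : Set ℝ, MapsTo (I * ·) (re ⁻¹' s) (im ⁻¹' s) := fun s w hw => by
    simpa using hw
  have key := HadamardThreeLines.norm_le_interp_of_mem_verticalClosedStrip'
    (f := fun w => f (I * w)) (z := -I * z) (a := A) (b := B) hab
    (by simpa [HadamardThreeLines.verticalClosedStrip] using hz)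
    (hd.comp (differentiable_id.const_mul I).diffContOnCl (hmaps _))
    (hbdd.mono (by rintro _ ⟨w, hw, rfl⟩; exact ⟨I * w, hmaps _ hw, rfl⟩))
    (fun w hw => ha _ (by simpa using hw)) (fun w hw => hb _ (by simpa using hw))
  simpa [← mul_assoc] using key

theorem norm_le_rpow_mul_rpow_of_im_ge {f : ℂ → E} {a b t B ε : ℝ} (hat : a < t) (htb : t ≤ b)
    (hd : DifferentiableOn ℂ f (im ⁻¹' Ici a)) (hB : ∀ z : ℂ, a ≤ z.im → ‖f z‖ ≤ B)
    (hε : ∀ z : ℂ, b ≤ z.im → ‖f z‖ ≤ ε) (hB0 : 0 < B) (hε0 : 0 < ε) {z : ℂ} (hz : t ≤ z.im) :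
    ‖f z‖ ≤ B ^ (1 - (t - a) / (b - a)) * ε ^ ((t - a) / (b - a)) := by
  have hab : 0 < b - a := by linarith
  set θ₀ := (t - a) / (b - a)
  set ε' := min ε B
  have hε'0 : 0 < ε' := lt_min hε0 hB0
  have hε' : ∀ w : ℂ, b ≤ w.im → ‖f w‖ ≤ ε' := fun w hw =>
    le_min (hε w hw) (hB w (by linarith))
  -- As `ε' ≤ B`, the bound `B ^ (1 - θ) * ε' ^ θ` only weakens as `θ` decreases; above the strip
  -- `‖f z‖ ≤ ε'` is this bound at `θ = 1`.
  suffices ∃ θ, θ₀ ≤ θ ∧ ‖f z‖ ≤ B ^ (1 - θ) * ε' ^ θ by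
    obtain ⟨θ, hθ, hfz⟩ := this
    calc ‖f z‖ ≤ B ^ (1 - θ) * ε' ^ θ := hfz
      _ ≤ B ^ (1 - θ₀) * ε' ^ θ₀ := Real.rpow_one_sub_mul_rpow_le hε'0 (min_le_right ε B) hθ
      _ ≤ B ^ (1 - θ₀) * ε ^ θ₀ := by gcongr; exact min_le_left ε B
  rcases le_or_gt z.im b with hzb | hbz
  · refine ⟨(z.im - a) / (b - a), div_le_div_of_nonneg_right (by linarith) hab.le,
      norm_le_interp_of_im_mem_Icc (by linarith) ⟨by linarith, hzb⟩ ((hd.mono ?_).diffContOnCl)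
        ⟨B, ?_⟩ (fun w hw => hB w hw.ge) (fun w hw => hε' w hw.ge)⟩
    · exact closure_minimal (fun w hw => hw.1.le) (isClosed_Ici.preimage continuous_im)
    · rintro _ ⟨w, hw, rfl⟩
      exact hB w hw.1
  · exact ⟨1, (div_le_one hab).mpr (by linarith), by simpa using hε' z hbz.le⟩

theorem uniformCauchySeqOn_im_ge_of_uniformCauchySeqOn {F : ℕ → ℂ → E} {η t : ℝ} (ht : 0 < t)
    (hF : ∀ n, DifferentiableOn ℂ (F n) UHP)
    (hbdd : ∀ s > 0, ∃ M > 0, ∀ n z, s ≤ z.im → ‖F n z‖ ≤ M)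
    (hη : UniformCauchySeqOn F atTop (im ⁻¹' Ici η)) :
    UniformCauchySeqOn F atTop (im ⁻¹' Ici t) := by
  rcases le_or_gt η t with hηt | htη
  · exact hη.mono fun z hz => hηt.trans hz
  set a := t / 2
  have ha : 0 < a := half_pos ht
  have hat : a < t := half_lt_self ht
  obtain ⟨M, hM0, hM⟩ := hbdd a ha
  set θ₀ := (t - a) / (η - a)
  have hθ₀ : 0 < θ₀ := div_pos (by linarith) (by linarith)
  have hlim : Tendsto (fun δ : ℝ => (2 * M) ^ (1 - θ₀) * δ ^ θ₀) (𝓝[>] 0) (𝓝 0) := by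
    have := ((Real.continuousAt_rpow_const 0 θ₀ (Or.inr hθ₀.le)).tendsto.const_mul
      ((2 * M) ^ (1 - θ₀))).mono_left (nhdsWithin_le_nhds (s := Ioi 0))
    simpa [Real.zero_rpow hθ₀.ne'] using this
  rw [Metric.uniformCauchySeqOn_iff] at hη ⊢
  intro ε hε
  obtain ⟨δ, hδε, hδ0⟩ := ((hlim.eventually (gt_mem_nhds hε)).and self_mem_nhdsWithin).exists
  obtain ⟨N, hN⟩ := hη δ hδ0
  refine ⟨N, fun m hm n hn z hz => ?_⟩
  rw [dist_eq_norm]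
  refine lt_of_le_of_lt ?_ hδε
  refine norm_le_rpow_mul_rpow_of_im_ge (f := F m - F n) hat htη.le
    (((hF m).sub (hF n)).mono fun w hw => ha.trans_le hw) (fun w hw => ?_)
    (fun w hw => by simpa [dist_eq_norm] using (hN m hm n hn w hw).le) (by positivity) hδ0 hz
  calc ‖F m w - F n w‖ ≤ ‖F m w‖ + ‖F n w‖ := norm_sub_le _ _
    _ ≤ M + M := add_le_add (hM m w hw) (hM n w hw)
    _ = 2 * M := by ring

end ThreeLines

theorem completeSpace_induced_of_cauchySeq {α β : Type*} [MetricSpace β] (f : α → β)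
    (hf : Function.Injective f)
    (h : ∀ u : ℕ → α, CauchySeq (f ∘ u) → ∃ a, Tendsto (f ∘ u) atTop (𝓝 (f a))) :
    @CompleteSpace α (MetricSpace.induced f hf ‹_›).toUniformSpace := by
  let := MetricSpace.induced f hf ‹_›
  have hiso : Isometry f := Isometry.of_dist_eq fun _ _ => rfl
  exact Metric.complete_of_cauchySeq_tendsto fun u hu =>
    (h u (hiso.uniformContinuous.comp_cauchySeq hu)).imp fun _ ha =>
      hiso.isEmbedding.tendsto_nhds_iff.mpr ha

theorem tendstoLocallyUniformlyOn_UHP_of_forall_im_ge {ι β : Type*} [UniformSpace β]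
    {F : ι → ℂ → β} {G : ℂ → β} {p : Filter ι}
    (h : ∀ t > 0, TendstoUniformlyOn F G p (im ⁻¹' Ici t)) :
    TendstoLocallyUniformlyOn F G p UHP :=
  tendstoLocallyUniformlyOn_of_forall_exists_nhds fun z hz =>
    ⟨im ⁻¹' Ici (z.im / 2), mem_nhdsWithin_of_mem_nhds
      (continuous_im.continuousAt.preimage_mem_nhds (Ici_mem_nhds (half_lt_self hz))),
      h _ (half_pos hz)⟩

namespace GoodFun

variable {c0 η : ℝ} {g h : ℂ → ℂ}

theorem analyticOnNhd (hg : GoodFun c0 g) : AnalyticOnNhd ℂ g UHP :=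
  isOpen_UHP.analyticOn_iff_analyticOnNhd.mp hg.1

theorem differentiableOn (hg : GoodFun c0 g) : DifferentiableOn ℂ g UHP :=
  hg.analyticOnNhd.differentiableOn

theorem norm_le (hc0 : 0 < c0) (hg : GoodFun c0 g) {t : ℝ} (ht : 0 < t) {z : ℂ}
    (hz : t ≤ z.im) : ‖g z‖ ≤ (c0 * t)⁻¹ :=
  calc ‖g z‖ = c0⁻¹ * (c0 * ‖g z‖) := by field_simp
    _ ≤ c0⁻¹ * z.im⁻¹ := by gcongr; exact (hg.2.1 z (ht.trans_le hz)).2.2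
    _ ≤ c0⁻¹ * t⁻¹ := by gcongr
    _ = (c0 * t)⁻¹ := (mul_inv c0 t).symm

theorem eq_of_eqOn (hg : GoodFun c0 g) (hh : GoodFun c0 h) (hgh : EqOn g h (im ⁻¹' Ici η)) :
    g = h := by
  set z₀ : ℂ := ((|η| + 1 : ℝ) : ℂ) * I
  have hz₀ : z₀.im = |η| + 1 := by simp [z₀]
  have hev : g =ᶠ[𝓝 z₀] h :=
    (continuous_im.continuousAt.eventually (eventually_gt_nhds
      (show η < z₀.im by rw [hz₀]; linarith [le_abs_self η]))).mono fun z (hz : η < z.im) =>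
        hgh hz.le
  have hUHP := hg.analyticOnNhd.eqOn_of_preconnected_of_eventuallyEq hh.analyticOnNhd
    (convex_halfSpace_im_gt 0).isPreconnected (show 0 < z₀.im by rw [hz₀]; positivity) hev
  funext z
  by_cases hz : z ∈ UHP
  · exact hUHP hz
  · rw [hg.2.2 z hz, hh.2.2 z hz]

theorem of_tendstoLocallyUniformlyOn {ι : Type*} {p : Filter ι} [p.NeBot] {F : ι → ℂ → ℂ}
    (hF : ∀ᶠ i in p, GoodFun c0 (F i)) (hlim : TendstoLocallyUniformlyOn F g p UHP)
    (hg : ∀ z, z ∉ UHP → g z = 0) : GoodFun c0 g := by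
  refine ⟨isOpen_UHP.analyticOn_iff_analyticOnNhd.mpr
    ((hlim.differentiableOn (hF.mono fun i hi => hi.differentiableOn) isOpen_UHP).analyticOnNhd
      isOpen_UHP), fun z hz => ?_, hg⟩
  have hgz := hlim.tendsto_at hz
  refine ⟨ge_of_tendsto ((continuous_im.tendsto _).comp hgz) (hF.mono fun i hi => (hi.2.1 z hz).1),
    ge_of_tendsto ((continuous_im.tendsto _).comp (hgz.const_mul z))
      (hF.mono fun i hi => (hi.2.1 z hz).2.1),
    le_of_tendsto (((continuous_norm.tendsto _).comp hgz).const_mul c0)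
      (hF.mono fun i hi => (hi.2.1 z hz).2.2)⟩

theorem exists_tendstoUniformlyOn (hc0 : 0 < c0) (hη : 0 < η) {u : ℕ → ℂ → ℂ}
    (hu : ∀ n, GoodFun c0 (u n)) (hcauchy : UniformCauchySeqOn u atTop (im ⁻¹' Ici η)) :
    ∃ g, GoodFun c0 g ∧ TendstoUniformlyOn u g atTop (im ⁻¹' Ici η) := by
  set G : ℂ → ℂ := fun z => limUnder atTop (u · z)
  have hunif : ∀ t > 0, TendstoUniformlyOn u G atTop (im ⁻¹' Ici t) := fun t ht => by
    have hcauchy_t := uniformCauchySeqOn_im_ge_of_uniformCauchySeqOn ht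
      (fun n => (hu n).differentiableOn)
      (fun s hs => ⟨(c0 * s)⁻¹, by positivity, fun n z hz => (hu n).norm_le hc0 hs hz⟩) hcauchy
    exact hcauchy_t.tendstoUniformlyOn_of_tendsto fun z hz =>
      (hcauchy_t.cauchySeq hz).tendsto_limUnder
  have hG : ∀ z, z ∉ UHP → G z = 0 := fun z hz => by
    simp only [G, (hu _).2.2 z hz]
    exact tendsto_const_nhds.limUnder_eq
  exact ⟨G, of_tendstoLocallyUniformlyOn (Eventually.of_forall hu)
    (tendstoLocallyUniformlyOn_UHP_of_forall_im_ge hunif) hG, hunif η hη⟩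

noncomputable def restrictImGe (hc0 : 0 < c0) (hη : 0 < η) (g : {g : ℂ → ℂ // GoodFun c0 g}) :
    {z : ℂ // η ≤ z.im} →ᵇ ℂ :=
  .ofNormedAddCommGroup (fun z => g.1 z)
    (g.2.differentiableOn.continuousOn.comp_continuous continuous_subtype_val
      fun z => hη.trans_le z.2)
    (c0 * η)⁻¹ fun z => g.2.norm_le hc0 hη z.2

theorem restrictImGe_injective (hc0 : 0 < c0) (hη : 0 < η) :
    Function.Injective (restrictImGe hc0 hη) := fun g h hgh =>
  Subtype.ext <| g.2.eq_of_eqOn h.2 fun z hz => DFunLike.congr_fun hgh ⟨z, hz⟩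

theorem exists_tendsto_restrictImGe (hc0 : 0 < c0) (hη : 0 < η)
    {u : ℕ → {g : ℂ → ℂ // GoodFun c0 g}} (hu : CauchySeq (restrictImGe hc0 hη ∘ u)) :
    ∃ g, Tendsto (restrictImGe hc0 hη ∘ u) atTop (𝓝 (restrictImGe hc0 hη g)) := by
  have hcauchy : UniformCauchySeqOn (fun n => (u n).1) atTop (im ⁻¹' Ici η) := by
    refine Metric.uniformCauchySeqOn_iff.mpr fun ε hε => ?_
    obtain ⟨N, hN⟩ := Metric.cauchySeq_iff.mp hu ε hε
    exact ⟨N, fun m hm n hn z hz => (dist_coe_le_dist ⟨z, hz⟩).trans_lt (hN m hm n hn)⟩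
  obtain ⟨g, hg, hlim⟩ := exists_tendstoUniformlyOn hc0 hη (fun n => (u n).2) hcauchy
  exact ⟨⟨g, hg⟩, tendsto_iff_tendstoUniformly.mpr
    (tendstoUniformlyOn_iff_tendstoUniformly_comp_coe.mp hlim)⟩

end GoodFun

/-- The distance `d_η(g,h) = sup_{Im z ≥ η} |h(z) − g(z)|` is a complete
metric on `L`. -/
theorem dist_eta_complete_metric (c0 η : ℝ) (hc0 : 0 < c0) (hη : 0 < η) :
    ∃ m : MetricSpace {g : ℂ → ℂ // GoodFun c0 g},
      (∀ g h : {g : ℂ → ℂ // GoodFun c0 g},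
        m.dist g h = ⨆ z : {z : ℂ // η ≤ z.im}, ‖h.1 z - g.1 z‖) ∧
      @CompleteSpace {g : ℂ → ℂ // GoodFun c0 g}
        m.toPseudoMetricSpace.toUniformSpace := by
  refine ⟨MetricSpace.induced _ (GoodFun.restrictImGe_injective hc0 hη) inferInstance,
    fun g h => ?_, completeSpace_induced_of_cauchySeq _ _ fun u hu =>
      GoodFun.exists_tendsto_restrictImGe hc0 hη hu⟩
  change dist (GoodFun.restrictImGe hc0 hη g) (GoodFun.restrictImGe hc0 hη h) = _
  rw [dist_eq_iSup]
  exact iSup_congr fun z => (dist_comm _ _).trans (dist_eq_norm _ _)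
end
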